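/- The function R(u;τ) := Σ_{ν ∈ 1/2+ℤ} {sign(ν) − E((ν+a)√(2y))} (−1)^{ν−1/2} e^{−πiν²τ − 2πiνu}, where y = Im τ and a = Im(u)/Im(τ), satisfies R(u;τ) + e^{−2πiu − πiτ} R(u+τ;τ) = 2 e^{−πiu − πiτ/4}. -/

import Mathlib

open Real MeasureTheory

/-- `E(z) = 2 ∫₀^z e^{-πu²} du`. -/
noncomputable def Efun (z : ℝ) : ℝ := 2 * ∫ u in (0:ℝ)..z, Real.exp (-π * u ^ 2)

section RfunAux
open Set

lemma gauss_int : Integrable (fun u : ℝ => rexp (-π * u ^ 2)) := by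
  simpa using integrable_exp_neg_mul_sq pi_pos

lemma gauss_Ioi : ∫ u in Ioi (0:ℝ), rexp (-π * u ^ 2) = 1 / 2 := by
  have := integral_gaussian_Ioi π
  rw [div_self pi_pos.ne', Real.sqrt_one] at this
  simpa using this

lemma gauss_shift (x : ℝ) : ∫ u in Ioi x, rexp (-π * (u - x) ^ 2) = 1 / 2 := by
  have h := (measurePreserving_add_right (volume : Measure ℝ) x).setIntegral_preimage_emb
    (measurableEmbedding_addRight x) (fun u => rexp (-π * (u - x) ^ 2)) (Ioi x)
  have hpre : (fun v : ℝ => v + x) ⁻¹' Ioi x = Ioi 0 := by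
    ext v; simp [lt_add_iff_pos_left]
  rw [hpre] at h
  rw [← h]
  simpa using gauss_Ioi

lemma Efun_split {x : ℝ} (hx : 0 ≤ x) :
    Efun x = 1 - 2 * ∫ u in Ioi x, rexp (-π * u ^ 2) := by
  have hsplit : (∫ u in Ioc 0 x, rexp (-π * u ^ 2)) + ∫ u in Ioi x, rexp (-π * u ^ 2)
      = 1 / 2 := by
    rw [← gauss_Ioi, ← setIntegral_union (Ioc_disjoint_Ioi le_rfl) measurableSet_Ioi
      gauss_int.integrableOn gauss_int.integrableOn, Ioc_union_Ioi_eq_Ioi hx]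
  rw [Efun, intervalIntegral.integral_of_le hx]
  linarith

lemma Efun_pos_bound {x : ℝ} (hx : 0 ≤ x) :
    0 ≤ 1 - Efun x ∧ 1 - Efun x ≤ rexp (-π * x ^ 2) := by
  rw [Efun_split hx]
  constructor
  · have : 0 ≤ ∫ u in Ioi x, rexp (-π * u ^ 2) :=
      setIntegral_nonneg measurableSet_Ioi fun u _ => (Real.exp_nonneg _)
    linarith
  · have hb : ∫ u in Ioi x, rexp (-π * u ^ 2)
        ≤ ∫ u in Ioi x, rexp (-π * x ^ 2) * rexp (-π * (u - x) ^ 2) := by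
      apply setIntegral_mono_on
      · exact gauss_int.integrableOn
      · exact (Integrable.const_mul (by simpa using (gauss_int.comp_sub_right x)) _).integrableOn
      · exact measurableSet_Ioi
      · intro u hu
        rw [← Real.exp_add]
        apply Real.exp_le_exp.mpr
        have h1 : 0 ≤ π * (x * (u - x)) :=
          mul_nonneg pi_pos.le (mul_nonneg hx (by linarith [mem_Ioi.mp hu]))
        nlinarith
    rw [integral_const_mul, gauss_shift] at hb
    linarith

lemma Efun_neg (x : ℝ) : Efun (-x) = -Efun x := by
  have h := intervalIntegral.integral_comp_neg (a := (0:ℝ)) (b := x)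
    (f := fun u => rexp (-π * u ^ 2))
  simp only [neg_sq, neg_zero] at h
  unfold Efun
  rw [intervalIntegral.integral_symm, ← h]
  ring

lemma abs_sign_sub_Efun (x : ℝ) : |Real.sign x - Efun x| ≤ rexp (-π * x ^ 2) := by
  rcases lt_trichotomy x 0 with h | h | h
  · obtain ⟨h1, h2⟩ := Efun_pos_bound (x := -x) (by linarith)
    rw [Real.sign_of_neg h, abs_sub_comm]
    have he : Efun x - (-1) = 1 - Efun (-x) := by rw [Efun_neg]; ring
    rw [abs_of_nonneg (by rw [he]; linarith), he]
    calc 1 - Efun (-x) ≤ rexp (-π * (-x) ^ 2) := h2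
      _ = rexp (-π * x ^ 2) := by ring_nf
  · simp [h, Real.sign_zero, Efun, Real.exp_nonneg]
  · obtain ⟨h1, h2⟩ := Efun_pos_bound h.le
    rw [Real.sign_of_pos h, abs_of_nonneg (by linarith)]
    exact h2

lemma summable_gauss_sq {y : ℝ} (hy : 0 < y) (c : ℝ) :
    Summable fun n : ℤ => rexp (-π * y * ((n : ℝ) + c) ^ 2) := by
  have h0 : (0 : ℝ) < (Complex.I * (y : ℂ)).im := by simp [hy]
  have h := (summable_jacobiTheta₂_term_iff (Complex.I * ((y * c : ℝ) : ℂ))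
    (Complex.I * (y : ℂ))).mpr h0
  have h2 := (summable_norm_iff.mpr h).mul_left (rexp (-π * y * c ^ 2))
  refine h2.congr fun n => ?_
  rw [norm_jacobiTheta₂_term, ← Real.exp_add]
  congr 1
  simp only [Complex.mul_im, Complex.I_re, Complex.I_im, Complex.ofReal_re, Complex.ofReal_im]
  ring

lemma exp_re_calc (τ v : ℂ) (ν : ℝ) :
    (-(π : ℂ) * Complex.I * (ν : ℂ) ^ 2 * τ - 2 * (π : ℂ) * Complex.I * (ν : ℂ) * v).re
      = π * ν ^ 2 * τ.im + 2 * π * ν * v.im := by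
  simp only [← Complex.ofReal_pow, Complex.sub_re, Complex.mul_re, Complex.mul_im,
    Complex.I_re, Complex.I_im, Complex.ofReal_re, Complex.ofReal_im, Complex.neg_re,
    Complex.neg_im, Complex.re_ofNat, Complex.im_ofNat]
  ring

lemma summable_Rterm {τ : ℂ} (hτ : 0 < τ.im) (u : ℂ) :
    Summable fun n : ℤ =>
      ((Real.sign ((n : ℝ) + 1/2) -
          Efun (((n : ℝ) + 1/2 + u.im / τ.im) * Real.sqrt (2 * τ.im)) : ℝ) : ℂ) *
        (-1 : ℂ) ^ n *
        Complex.exp (-(π : ℂ) * Complex.I * ((n : ℂ) + 1/2) ^ 2 * τ -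
          2 * (π : ℂ) * Complex.I * ((n : ℂ) + 1/2) * u) := by
  set a : ℝ := u.im / τ.im with ha
  have hu : u.im = a * τ.im := by rw [ha, div_mul_cancel₀ _ hτ.ne']
  apply Summable.of_norm_bounded_eventually
    (g := fun n : ℤ => rexp (-π * τ.im * ((n : ℝ) + (1/2 + a)) ^ 2)) (summable_gauss_sq hτ _)
  have key : ∀ n : ℤ, |a| + 1 ≤ |(n : ℝ)| →
      ‖((Real.sign ((n : ℝ) + 1/2) -
          Efun (((n : ℝ) + 1/2 + a) * Real.sqrt (2 * τ.im)) : ℝ) : ℂ) *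
        (-1 : ℂ) ^ n *
        Complex.exp (-(π : ℂ) * Complex.I * ((n : ℂ) + 1/2) ^ 2 * τ -
          2 * (π : ℂ) * Complex.I * ((n : ℂ) + 1/2) * u)‖
        ≤ rexp (-π * τ.im * ((n : ℝ) + (1/2 + a)) ^ 2) := by
    intro n hn
    set ν : ℝ := (n : ℝ) + 1/2 with hν
    set X : ℝ := (ν + a) * Real.sqrt (2 * τ.im) with hX
    have hsqrt : Real.sqrt (2 * τ.im) ^ 2 = 2 * τ.im :=
      Real.sq_sqrt (by linarith)
    have hsqrtpos : 0 < Real.sqrt (2 * τ.im) := Real.sqrt_pos.mpr (by linarith)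
    have hsign : Real.sign ν = Real.sign X := by
      rcases abs_cases (n : ℝ) with ⟨h1, h2⟩ | ⟨h1, h2⟩
      · have hν0 : 0 < ν := by
          rw [hν]; rcases abs_cases a with ⟨h3, h4⟩ | ⟨h3, h4⟩ <;> linarith
        have hX0 : 0 < X := by
          apply mul_pos _ hsqrtpos
          rw [hν]; rcases abs_cases a with ⟨h3, h4⟩ | ⟨h3, h4⟩ <;> linarith
        rw [Real.sign_of_pos hν0, Real.sign_of_pos hX0]
      · have hν0 : ν < 0 := by
          rw [hν]; rcases abs_cases a with ⟨h3, h4⟩ | ⟨h3, h4⟩ <;> linarith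
        have hX0 : X < 0 := by
          apply mul_neg_of_neg_of_pos _ hsqrtpos
          rw [hν]; rcases abs_cases a with ⟨h3, h4⟩ | ⟨h3, h4⟩ <;> linarith
        rw [Real.sign_of_neg hν0, Real.sign_of_neg hX0]
    have hcast : ((n : ℂ) + 1/2) = ((ν : ℝ) : ℂ) := by rw [hν]; push_cast; ring
    rw [hcast]
    rw [norm_mul, norm_mul]
    have hz : ‖(-1 : ℂ) ^ n‖ = 1 := by
      rw [norm_zpow, norm_neg, norm_one, one_zpow]
    rw [hz, mul_one]
    rw [Complex.norm_real, Real.norm_eq_abs, Complex.norm_exp,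
      exp_re_calc τ u ν]
    calc |Real.sign ν - Efun X| * rexp (π * ν ^ 2 * τ.im + 2 * π * ν * u.im)
        ≤ rexp (-π * X ^ 2) * rexp (π * ν ^ 2 * τ.im + 2 * π * ν * u.im) := by
          apply mul_le_mul_of_nonneg_right _ (Real.exp_nonneg _)
          rw [hsign]; exact abs_sign_sub_Efun X
      _ = rexp (-π * X ^ 2 + (π * ν ^ 2 * τ.im + 2 * π * ν * u.im)) := (Real.exp_add _ _).symm
      _ ≤ rexp (-π * τ.im * ((n : ℝ) + (1/2 + a)) ^ 2) := by
          apply Real.exp_le_exp.mpr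
          have hX2 : X ^ 2 = (ν + a) ^ 2 * (2 * τ.im) := by rw [hX, mul_pow, hsqrt]
          have hna : (n : ℝ) + (1/2 + a) = ν + a := by rw [hν]; ring
          have h0 : 0 ≤ π * τ.im * a ^ 2 :=
            mul_nonneg (mul_nonneg pi_pos.le hτ.le) (sq_nonneg a)
          rw [hX2, hna, hu]
          nlinarith [sq_nonneg (ν + a)]
  rw [Filter.eventually_cofinite]
  apply Set.Finite.subset (Set.finite_Icc (-(⌈|a|⌉ + 1)) (⌈|a|⌉ + 1))
  intro n hn
  simp only [Set.mem_setOf_eq] at hn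
  rw [Set.mem_Icc]
  by_contra hmem
  rw [not_and_or, not_le, not_le] at hmem
  refine hn (key n ?_)
  have hceil : |a| ≤ (⌈|a|⌉ : ℝ) := Int.le_ceil _
  rcases hmem with h | h
  · have h' : (n : ℝ) < -((⌈|a|⌉ : ℝ) + 1) := by exact_mod_cast h
    exact le_abs.mpr (Or.inr (by linarith))
  · have h' : ((⌈|a|⌉ : ℝ) + 1) < (n : ℝ) := by exact_mod_cast h
    exact le_abs.mpr (Or.inl (by linarith))


end RfunAux

/-- The nonholomorphic completion term
`R(u;τ) = Σ_{ν∈1/2+ℤ} {sign(ν) - E((ν+a)√(2y))} (-1)^{ν-1/2} e^{-πiν²τ - 2πiνu}`,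
with `y = Im τ`, `a = Im u / Im τ`, and `ν = n + 1/2`. -/
noncomputable def Rfun (u τ : ℂ) : ℂ :=
  ∑' n : ℤ,
    ((Real.sign ((n : ℝ) + 1/2) -
        Efun (((n : ℝ) + 1/2 + u.im / τ.im) * Real.sqrt (2 * τ.im)) : ℝ) : ℂ) *
      (-1 : ℂ) ^ n *
      Complex.exp (-(π : ℂ) * Complex.I * ((n : ℂ) + 1/2) ^ 2 * τ -
        2 * (π : ℂ) * Complex.I * ((n : ℂ) + 1/2) * u)

section RfunAux2
open Set

lemma sign_diff (n : ℤ) :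
    Real.sign ((n : ℝ) + 1/2) - Real.sign ((n : ℝ) - 1/2) = if n = 0 then 2 else 0 := by
  rcases lt_trichotomy n 0 with h | h | h
  · have h1' : n ≤ -1 := by omega
    have h1 : (n : ℝ) ≤ -1 := by exact_mod_cast h1'
    rw [Real.sign_of_neg (by linarith : (n : ℝ) + 1/2 < 0),
      Real.sign_of_neg (by linarith : (n : ℝ) - 1/2 < 0), if_neg h.ne]
    ring
  · subst h
    rw [if_pos rfl]
    norm_num
    rw [Real.sign_of_pos (by norm_num : (0:ℝ) < 1/2),
      Real.sign_of_neg (by norm_num : -(1/2 : ℝ) < 0)]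
    norm_num
  · have h1 : (1 : ℝ) ≤ (n : ℝ) := by exact_mod_cast h
    rw [Real.sign_of_pos (by linarith : (0:ℝ) < (n : ℝ) + 1/2),
      Real.sign_of_pos (by linarith : (0:ℝ) < (n : ℝ) - 1/2), if_neg h.ne']
    ring

lemma term_pair {τ : ℂ} (hτ : 0 < τ.im) (u : ℂ) (n : ℤ) :
    ((Real.sign ((n : ℝ) + 1/2) -
        Efun (((n : ℝ) + 1/2 + u.im / τ.im) * Real.sqrt (2 * τ.im)) : ℝ) : ℂ) *
      (-1 : ℂ) ^ n *
      Complex.exp (-(π : ℂ) * Complex.I * ((n : ℂ) + 1/2) ^ 2 * τ -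
        2 * (π : ℂ) * Complex.I * ((n : ℂ) + 1/2) * u) +
    Complex.exp (-2 * (π : ℂ) * Complex.I * u - (π : ℂ) * Complex.I * τ) *
      (((Real.sign (((n - 1 : ℤ) : ℝ) + 1/2) -
          Efun ((((n - 1 : ℤ) : ℝ) + 1/2 + (u + τ).im / τ.im) * Real.sqrt (2 * τ.im)) : ℝ) : ℂ) *
        (-1 : ℂ) ^ (n - 1) *
        Complex.exp (-(π : ℂ) * Complex.I * (((n - 1 : ℤ) : ℂ) + 1/2) ^ 2 * τ -
          2 * (π : ℂ) * Complex.I * (((n - 1 : ℤ) : ℂ) + 1/2) * (u + τ))) =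
    if n = 0 then 2 * Complex.exp (-(π : ℂ) * Complex.I * u - (π : ℂ) * Complex.I * τ / 4)
      else 0 := by
  have him : (u + τ).im / τ.im = u.im / τ.im + 1 := by
    rw [Complex.add_im]; field_simp
  have harg : (((n - 1 : ℤ) : ℝ) + 1/2 + (u + τ).im / τ.im)
      = ((n : ℝ) + 1/2 + u.im / τ.im) := by
    rw [him]; push_cast; ring
  have hsign : (((n - 1 : ℤ) : ℝ) + 1/2) = ((n : ℝ) - 1/2) := by push_cast; ring
  have hpow : (-1 : ℂ) ^ (n - 1) = -(-1 : ℂ) ^ n := by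
    rw [zpow_sub₀ (by norm_num : (-1 : ℂ) ≠ 0), zpow_one]
    field_simp
  have hexp : Complex.exp (-2 * (π : ℂ) * Complex.I * u - (π : ℂ) * Complex.I * τ) *
      Complex.exp (-(π : ℂ) * Complex.I * (((n - 1 : ℤ) : ℂ) + 1/2) ^ 2 * τ -
        2 * (π : ℂ) * Complex.I * (((n - 1 : ℤ) : ℂ) + 1/2) * (u + τ))
      = Complex.exp (-(π : ℂ) * Complex.I * ((n : ℂ) + 1/2) ^ 2 * τ -
        2 * (π : ℂ) * Complex.I * ((n : ℂ) + 1/2) * u) := by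
    rw [← Complex.exp_add]
    congr 1
    push_cast
    ring
  rw [harg, hsign, hpow]
  set E : ℝ := Efun (((n : ℝ) + 1/2 + u.im / τ.im) * Real.sqrt (2 * τ.im)) with hE
  set s1 : ℝ := Real.sign ((n : ℝ) + 1/2) with hs1
  set s2 : ℝ := Real.sign ((n : ℝ) - 1/2) with hs2
  set W : ℂ := Complex.exp (-(π : ℂ) * Complex.I * ((n : ℂ) + 1/2) ^ 2 * τ -
    2 * (π : ℂ) * Complex.I * ((n : ℂ) + 1/2) * u) with hW
  set c : ℂ := Complex.exp (-2 * (π : ℂ) * Complex.I * u - (π : ℂ) * Complex.I * τ) with hc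
  set e2 : ℂ := Complex.exp (-(π : ℂ) * Complex.I * (((n - 1 : ℤ) : ℂ) + 1/2) ^ 2 * τ -
    2 * (π : ℂ) * Complex.I * (((n - 1 : ℤ) : ℂ) + 1/2) * (u + τ)) with he2
  have h2 : c * (((s2 - E : ℝ) : ℂ) * (-(-1 : ℂ) ^ n) * e2)
      = ((s2 - E : ℝ) : ℂ) * (-(-1 : ℂ) ^ n) * W := by
    rw [← hexp]; ring
  rw [h2]
  have hcomb : ((s1 - E : ℝ) : ℂ) * (-1 : ℂ) ^ n * W +
      ((s2 - E : ℝ) : ℂ) * (-(-1 : ℂ) ^ n) * W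
      = ((s1 - s2 : ℝ) : ℂ) * ((-1 : ℂ) ^ n * W) := by
    push_cast; ring
  rw [hcomb, hs1, hs2, sign_diff]
  by_cases h : n = 0
  · subst h
    rw [if_pos rfl, if_pos rfl, hW]
    rw [show (-(π : ℂ) * Complex.I * (((0 : ℤ) : ℂ) + 1/2) ^ 2 * τ -
        2 * (π : ℂ) * Complex.I * (((0 : ℤ) : ℂ) + 1/2) * u)
        = -(π : ℂ) * Complex.I * u - (π : ℂ) * Complex.I * τ / 4 from by push_cast; ring]
    norm_num
  · rw [if_neg h, if_neg h]
    norm_num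

noncomputable def Rterm (u τ : ℂ) (n : ℤ) : ℂ :=
  ((Real.sign ((n : ℝ) + 1/2) -
      Efun (((n : ℝ) + 1/2 + u.im / τ.im) * Real.sqrt (2 * τ.im)) : ℝ) : ℂ) *
    (-1 : ℂ) ^ n *
    Complex.exp (-(π : ℂ) * Complex.I * ((n : ℂ) + 1/2) ^ 2 * τ -
      2 * (π : ℂ) * Complex.I * ((n : ℂ) + 1/2) * u)


end RfunAux2

/-- `R(u) + e^{-2πiu - πiτ} R(u+τ) = 2 e^{-πiu - πiτ/4}`. -/
theorem Rfun_elliptic (τ : ℂ) (hτ : 0 < τ.im) (u : ℂ) :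
    Rfun u τ +
      Complex.exp (-2 * (π : ℂ) * Complex.I * u - (π : ℂ) * Complex.I * τ) * Rfun (u + τ) τ =
      2 * Complex.exp (-(π : ℂ) * Complex.I * u - (π : ℂ) * Complex.I * τ / 4) := by
  classical
  set c : ℂ := Complex.exp (-2 * (π : ℂ) * Complex.I * u - (π : ℂ) * Complex.I * τ) with hc
  have h1 : Summable (Rterm u τ) := summable_Rterm hτ u
  have h2 : Summable (Rterm (u + τ) τ) := summable_Rterm hτ (u + τ)
  have h2' : Summable (fun n : ℤ => c * Rterm (u + τ) τ (n - 1)) :=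
    (h2.comp_injective (Equiv.subRight (1 : ℤ)).injective).mul_left c
  have hR1 : Rfun u τ = ∑' n : ℤ, Rterm u τ n := rfl
  have hR2 : Rfun (u + τ) τ = ∑' n : ℤ, Rterm (u + τ) τ (n - 1) :=
    ((Equiv.subRight (1 : ℤ)).tsum_eq (Rterm (u + τ) τ)).symm
  have key : ∀ n : ℤ, Rterm u τ n + c * Rterm (u + τ) τ (n - 1) =
      if n = 0 then
        2 * Complex.exp (-(π : ℂ) * Complex.I * u - (π : ℂ) * Complex.I * τ / 4) else 0 :=
    fun n => term_pair hτ u n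
  calc Rfun u τ + c * Rfun (u + τ) τ
      = (∑' n : ℤ, Rterm u τ n) + ∑' n : ℤ, c * Rterm (u + τ) τ (n - 1) := by
        rw [hR1, hR2, tsum_mul_left]
    _ = ∑' n : ℤ, (Rterm u τ n + c * Rterm (u + τ) τ (n - 1)) := (Summable.tsum_add h1 h2').symm
    _ = ∑' n : ℤ, (if n = 0 then
          2 * Complex.exp (-(π : ℂ) * Complex.I * u - (π : ℂ) * Complex.I * τ / 4) else 0) :=
        tsum_congr key
    _ = 2 * Complex.exp (-(π : ℂ) * Complex.I * u - (π : ℂ) * Complex.I * τ / 4) :=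
        tsum_ite_eq 0 _
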